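/- Let 1 ≤ p, q < ∞ and let (w, v) be a pair of weights on ℝⁿ such that the weak-type Sobolev inequality ‖u‖_{L^{q,∞}(w)} ≤ C₀ ‖∇u‖_{L^p(v)} holds for all compactly supported Lipschitz u. Then there is a constant C = C(C₀, p, q) such that the Lorentz-space inequality ‖u‖_{L^{q,p}(w)} ≤ C ‖∇u‖_{L^p(v)} holds for all compactly supported Lipschitz u. -/

import Mathlib

/-!
For `c > 0` the truncation `τ_c |u| = min (max (|u| - c) 0) c` is again Lipschitz with compact
support, equals `c` on `{|u| ≥ 2c}`, and its gradient vanishes outside the annulus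
`{c < |u| < 2c}`, where it has the norm of `∇u`. The weak-type inequality for `τ_c |u|` at height
`c / 2` therefore bounds `c^p μ{|u| > 2c}^{p/q}` by `2^p C₀^p` times the energy of `u` on that
annulus. Cutting the Lorentz integral into the pieces `t ∈ (2c, 4c]`, `c = 2^k`, and summing over
`k` gives the constant `2^{3p-1} C₀^p`, because the annuli `{2^k < |u| < 2^{k+1}}` are disjoint.
-/

open MeasureTheory Set Filter Topology
open scoped ENNReal NNReal

noncomputable section

/-- `mazyaTrunc (2 ^ k) ∘ u` is Maz'ya's truncation `τ_k |u|`. -/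
def mazyaTrunc (c r : ℝ) : ℝ := min (max (|r| - c) 0) c

def weakLqNorm {E : Type*} [MeasurableSpace E] (μ : Measure E) (q : ℝ) (u : E → ℝ) : ℝ≥0∞ :=
  ⨆ (t : ℝ) (_ : 0 < t), ENNReal.ofReal t * μ {x | t < |u x|} ^ (1 / q)

def gradEnergy {E : Type*} [NormedAddCommGroup E] [NormedSpace ℝ E] [MeasurableSpace E]
    (ν : Measure E) (p : ℝ) (u : E → ℝ) : ℝ≥0∞ :=
  ∫⁻ x, (‖fderiv ℝ u x‖₊ : ℝ≥0∞) ^ p ∂ν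

end

section Truncation

variable {c : ℝ}

lemma mazyaTrunc_nonneg (hc : 0 ≤ c) (r : ℝ) : 0 ≤ mazyaTrunc c r :=
  le_min (le_max_right _ _) hc

lemma mazyaTrunc_le (r : ℝ) : mazyaTrunc c r ≤ c :=
  min_le_right _ _

lemma mazyaTrunc_zero (hc : 0 ≤ c) : mazyaTrunc c 0 = 0 := by
  simp [mazyaTrunc, hc]

lemma mazyaTrunc_of_two_mul_le {r : ℝ} (h : 2 * c ≤ |r|) : mazyaTrunc c r = c := by
  rw [mazyaTrunc, max_eq_left (by linarith [abs_nonneg r]), min_eq_right (by linarith)]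

lemma mazyaTrunc_of_abs_mem_Ioo {r : ℝ} (h : |r| ∈ Ioo c (2 * c)) : mazyaTrunc c r = |r| - c := by
  rw [mazyaTrunc, max_eq_left (by linarith [h.1]), min_eq_left (by linarith [h.2])]

lemma abs_mem_Ioo_of_mazyaTrunc_mem_Ioo {r : ℝ} (h : mazyaTrunc c r ∈ Ioo 0 c) :
    |r| ∈ Ioo c (2 * c) := by
  simp only [mazyaTrunc, mem_Ioo, lt_min_iff, min_lt_iff, lt_max_iff, max_lt_iff] at h ⊢
  constructor <;> rcases h with ⟨⟨h | h, -⟩, h' | h'⟩ <;> linarith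

lemma lipschitzWith_mazyaTrunc (c : ℝ) : LipschitzWith 1 (mazyaTrunc c) := by
  have h : LipschitzWith 1 fun r : ℝ => |r| - c := LipschitzWith.of_dist_le_mul fun r s => by
    simpa [Real.dist_eq] using abs_abs_sub_abs_le_abs_sub r s
  exact (h.max_const 0).min_const c

end Truncation

section Derivative

variable {E : Type*} [NormedAddCommGroup E] [NormedSpace ℝ E] {u : E → ℝ} {x : E} {c : ℝ}

lemma norm_fderiv_abs_comp (hu : ContinuousAt u x) (hx : u x ≠ 0) :
    ‖fderiv ℝ (fun y => |u y|) x‖ = ‖fderiv ℝ u x‖ := by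
  rcases hx.lt_or_gt with hneg | hpos
  · have h : (fun y => |u y|) =ᶠ[𝓝 x] fun y => -u y :=
      (hu.eventually (gt_mem_nhds hneg)).mono fun y hy => abs_of_neg hy
    rw [h.fderiv_eq, fderiv_fun_neg, norm_neg]
  · have h : (fun y => |u y|) =ᶠ[𝓝 x] u :=
      (hu.eventually (lt_mem_nhds hpos)).mono fun y hy => abs_of_pos hy
    rw [h.fderiv_eq]

lemma fderiv_mazyaTrunc_comp_eq_zero_or (hc : 0 ≤ c) (hu : ContinuousAt u x) :
    fderiv ℝ (mazyaTrunc c ∘ u) x = 0 ∨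
      |u x| ∈ Ioo c (2 * c) ∧ ‖fderiv ℝ (mazyaTrunc c ∘ u) x‖ = ‖fderiv ℝ u x‖ := by
  rcases (mazyaTrunc_nonneg hc (u x)).eq_or_lt with h0 | h0
  · exact .inl (IsLocalMin.fderiv_eq_zero
      (.of_forall fun y => h0.symm.trans_le (mazyaTrunc_nonneg hc (u y))))
  rcases (mazyaTrunc_le (u x)).eq_or_lt with hc' | hc'
  · exact .inl (IsLocalMax.fderiv_eq_zero
      (.of_forall fun y => (mazyaTrunc_le (u y)).trans_eq hc'.symm))
  have hx := abs_mem_Ioo_of_mazyaTrunc_mem_Ioo ⟨h0, hc'⟩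
  have hloc : mazyaTrunc c ∘ u =ᶠ[𝓝 x] fun y => |u y| - c :=
    (hu.abs.eventually (isOpen_Ioo.mem_nhds hx)).mono fun y hy => mazyaTrunc_of_abs_mem_Ioo hy
  refine .inr ⟨hx, ?_⟩
  rw [hloc.fderiv_eq, fderiv_sub_const,
    norm_fderiv_abs_comp hu (abs_pos.1 (hc.trans_lt hx.1))]

lemma gradEnergy_mazyaTrunc_comp_le [MeasurableSpace E] [OpensMeasurableSpace E] (ν : Measure E)
    {p : ℝ} (hp : 0 < p) (hc : 0 ≤ c) (hu : Continuous u) :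
    gradEnergy ν p (mazyaTrunc c ∘ u) ≤
      ∫⁻ x in {x | |u x| ∈ Ioo c (2 * c)}, (‖fderiv ℝ u x‖₊ : ℝ≥0∞) ^ p ∂ν := by
  have hA : MeasurableSet {x | |u x| ∈ Ioo c (2 * c)} := hu.abs.measurable measurableSet_Ioo
  rw [← lintegral_indicator hA]
  refine lintegral_mono fun x => ?_
  rcases fderiv_mazyaTrunc_comp_eq_zero_or hc hu.continuousAt (x := x) with h | ⟨hx, hnorm⟩
  · simp [h, ENNReal.zero_rpow_of_pos hp]
  · rw [indicator_of_mem (show x ∈ {x | |u x| ∈ Ioo c (2 * c)} from hx),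
      show ‖fderiv ℝ (mazyaTrunc c ∘ u) x‖₊ = ‖fderiv ℝ u x‖₊ from NNReal.eq hnorm]

end Derivative

section LevelSets

variable {E : Type*} [MeasurableSpace E] {μ : Measure E} {u : E → ℝ} {q c : ℝ}

lemma ofReal_mul_measure_le_weakLqNorm_mazyaTrunc_comp (hq : 0 < q) (hc : 0 < c) :
    ENNReal.ofReal (c / 2) * μ {x | 2 * c < |u x|} ^ (1 / q) ≤
      weakLqNorm μ q (mazyaTrunc c ∘ u) := by
  refine le_iSup₂_of_le (c / 2) (half_pos hc) (mul_le_mul_right (ENNReal.rpow_le_rpow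
    (measure_mono fun x hx => ?_) (by positivity)) _)
  show c / 2 < |mazyaTrunc c (u x)|
  rw [mazyaTrunc_of_two_mul_le hx.le, abs_of_pos hc]
  exact half_lt_self hc

lemma ofReal_rpow_mul_measure_le_setLIntegral_annulus [NormedAddCommGroup E] [NormedSpace ℝ E]
    [OpensMeasurableSpace E] {ν : Measure E} {p : ℝ} {C₀ : ℝ≥0∞} (hp : 0 < p) (hq : 0 < q)
    (hc : 0 < c) (hu : Continuous u)
    (hweak : weakLqNorm μ q (mazyaTrunc c ∘ u) ≤
      C₀ * gradEnergy ν p (mazyaTrunc c ∘ u) ^ (1 / p)) :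
    ENNReal.ofReal (c ^ p) * μ {x | 2 * c < |u x|} ^ (p / q) ≤
      ENNReal.ofReal (2 ^ p) * (C₀ ^ p *
        ∫⁻ x in {x | |u x| ∈ Ioo c (2 * c)}, (‖fderiv ℝ u x‖₊ : ℝ≥0∞) ^ p ∂ν) := by
  have h : ENNReal.ofReal (c / 2) * μ {x | 2 * c < |u x|} ^ (1 / q) ≤
      C₀ * (∫⁻ x in {x | |u x| ∈ Ioo c (2 * c)}, (‖fderiv ℝ u x‖₊ : ℝ≥0∞) ^ p ∂ν) ^ (1 / p) :=
    calc _ ≤ weakLqNorm μ q (mazyaTrunc c ∘ u) :=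
          ofReal_mul_measure_le_weakLqNorm_mazyaTrunc_comp hq hc
      _ ≤ _ := hweak
      _ ≤ _ := by gcongr; exact gradEnergy_mazyaTrunc_comp_le ν hp hc.le hu
  replace h := ENNReal.rpow_le_rpow h hp.le
  rw [ENNReal.mul_rpow_of_nonneg _ _ hp.le, ENNReal.mul_rpow_of_nonneg _ _ hp.le,
    ← ENNReal.rpow_mul, ← ENNReal.rpow_mul, one_div_mul_cancel hp.ne', ENNReal.rpow_one,
    one_div_mul_eq_div, ENNReal.ofReal_rpow_of_pos (half_pos hc)] at h
  have hsplit :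
      ENNReal.ofReal (c ^ p) = ENNReal.ofReal (2 ^ p) * ENNReal.ofReal ((c / 2) ^ p) := by
    rw [← ENNReal.ofReal_mul (by positivity), ← Real.mul_rpow (by norm_num) (half_pos hc).le,
      mul_div_cancel₀ c two_ne_zero]
  rw [hsplit, mul_assoc]
  exact mul_le_mul_right h _

end LevelSets

lemma Ioi_zero_subset_iUnion_Ioc_two_zpow :
    Ioi (0 : ℝ) ⊆ ⋃ k : ℤ, Ioc (2 * 2 ^ k) (4 * 2 ^ k) := by
  intro t ht
  obtain ⟨k, hk₁, hk₂⟩ := exists_mem_Ioc_zpow (half_pos (mem_Ioi.1 ht)) one_lt_two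
  rw [zpow_add_one₀ two_ne_zero] at hk₂
  exact mem_iUnion.2 ⟨k, by constructor <;> linarith⟩

lemma pairwise_disjoint_Ioo_two_zpow :
    Pairwise (Function.onFun Disjoint fun k : ℤ => Ioo ((2 : ℝ) ^ k) (2 * 2 ^ k)) := by
  simpa [Order.succ_eq_add_one, zpow_add_one₀, mul_comm] using
    (zpow_right_mono₀ (one_le_two : (1 : ℝ) ≤ 2)).pairwise_disjoint_on_Ioo_succ

lemma tsum_setLIntegral_dyadic_annulus_le {E : Type*} [MeasurableSpace E] {ν : Measure E}
    {f : E → ℝ} (hf : Measurable f) (g : E → ℝ≥0∞) :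
    ∑' k : ℤ, ∫⁻ x in {x | f x ∈ Ioo ((2 : ℝ) ^ k) (2 * 2 ^ k)}, g x ∂ν ≤ ∫⁻ x, g x ∂ν := by
  rw [← lintegral_iUnion (s := fun k : ℤ => {x | f x ∈ Ioo ((2 : ℝ) ^ k) (2 * 2 ^ k)})
    (fun k => hf measurableSet_Ioo)
    fun j k hjk => (pairwise_disjoint_Ioo_two_zpow hjk).preimage f]
  exact setLIntegral_le_lintegral _ _

lemma four_mul_rpow_sub_one_mul {c p : ℝ} (hc : 0 < c) :
    (4 * c) ^ (p - 1) * (2 * c) = 2 ^ (2 * p - 1) * c ^ p := by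
  have h4 : (4 : ℝ) ^ (p - 1) * 2 = 2 ^ (2 * p - 1) := by
    rw [show (4 : ℝ) = 2 ^ (2 : ℝ) by norm_num, ← Real.rpow_mul (by norm_num),
      ← Real.rpow_add_one two_ne_zero]
    ring_nf
  rw [Real.mul_rpow (by norm_num) hc.le, ← h4, Real.rpow_sub_one hc.ne']
  field_simp

lemma setLIntegral_Ioc_rpow_mul_le {φ : ℝ → ℝ≥0∞} (hφ : Antitone φ) {p c : ℝ} (hp : 1 ≤ p)
    (hc : 0 < c) :
    ∫⁻ t in Ioc (2 * c) (4 * c), ENNReal.ofReal (t ^ (p - 1)) * φ t ≤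
      ENNReal.ofReal (2 ^ (2 * p - 1)) * (ENNReal.ofReal (c ^ p) * φ (2 * c)) := by
  calc ∫⁻ t in Ioc (2 * c) (4 * c), ENNReal.ofReal (t ^ (p - 1)) * φ t
      ≤ ∫⁻ _ in Ioc (2 * c) (4 * c), ENNReal.ofReal ((4 * c) ^ (p - 1)) * φ (2 * c) :=
        setLIntegral_mono measurable_const fun t ht => mul_le_mul'
          (ENNReal.ofReal_le_ofReal (Real.rpow_le_rpow (by linarith [ht.1]) ht.2 (by linarith)))
          (hφ ht.1.le)
    _ = ENNReal.ofReal ((4 * c) ^ (p - 1) * (2 * c)) * φ (2 * c) := by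
        rw [setLIntegral_const, Real.volume_Ioc, ENNReal.ofReal_mul (by positivity)]
        ring_nf
    _ = _ := by
        rw [four_mul_rpow_sub_one_mul hc, ENNReal.ofReal_mul (by positivity), mul_assoc]

section Lorentz

variable {E : Type*} [NormedAddCommGroup E] [NormedSpace ℝ E] [MeasurableSpace E]
  [OpensMeasurableSpace E]

theorem lintegral_rpow_mul_measure_le_of_weakType (μ ν : Measure E) {p q : ℝ} (hp : 1 ≤ p)
    (hq : 0 < q) {C₀ : ℝ≥0∞}
    (hweak : ∀ u : E → ℝ, (∃ K : ℝ≥0, LipschitzWith K u) → HasCompactSupport u →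
      weakLqNorm μ q u ≤ C₀ * gradEnergy ν p u ^ (1 / p))
    {u : E → ℝ} {K : ℝ≥0} (hu : LipschitzWith K u) (hsupp : HasCompactSupport u) :
    ∫⁻ t in Ioi 0, ENNReal.ofReal (t ^ (p - 1)) * μ {x | t < |u x|} ^ (p / q) ≤
      ENNReal.ofReal (2 ^ (3 * p - 1)) * C₀ ^ p * gradEnergy ν p u := by
  have hp₀ : 0 < p := by linarith
  set φ : ℝ → ℝ≥0∞ := fun t => μ {x | t < |u x|} ^ (p / q)
  have hφ : Antitone φ := fun s t hst =>
    ENNReal.rpow_le_rpow (measure_mono fun x hx => hst.trans_lt hx) (by positivity)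
  set J : ℤ → ℝ≥0∞ := fun k =>
    ∫⁻ x in {x | |u x| ∈ Ioo ((2 : ℝ) ^ k) (2 * 2 ^ k)}, (‖fderiv ℝ u x‖₊ : ℝ≥0∞) ^ p ∂ν
  have hlevel (k : ℤ) :
      ∫⁻ t in Ioc (2 * 2 ^ k) (4 * 2 ^ k), ENNReal.ofReal (t ^ (p - 1)) * φ t ≤
        ENNReal.ofReal (2 ^ (3 * p - 1)) * C₀ ^ p * J k := by
    have hc : (0 : ℝ) < 2 ^ k := zpow_pos two_pos k
    have hweak_k := hweak _ ⟨_, (lipschitzWith_mazyaTrunc _).comp hu⟩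
      (hsupp.comp_left (mazyaTrunc_zero hc.le))
    calc _ ≤ _ := setLIntegral_Ioc_rpow_mul_le hφ hp hc
      _ ≤ ENNReal.ofReal (2 ^ (2 * p - 1)) * (ENNReal.ofReal (2 ^ p) * (C₀ ^ p * J k)) :=
          mul_le_mul_right
            (ofReal_rpow_mul_measure_le_setLIntegral_annulus hp₀ hq hc hu.continuous hweak_k) _
      _ = _ := by
          rw [← mul_assoc, ← ENNReal.ofReal_mul (by positivity), ← Real.rpow_add two_pos,
            mul_assoc]
          ring_nf
  calc ∫⁻ t in Ioi 0, ENNReal.ofReal (t ^ (p - 1)) * φ t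
      ≤ ∑' k : ℤ, ∫⁻ t in Ioc (2 * 2 ^ k) (4 * 2 ^ k), ENNReal.ofReal (t ^ (p - 1)) * φ t :=
        (lintegral_mono_set Ioi_zero_subset_iUnion_Ioc_two_zpow).trans (lintegral_iUnion_le _ _)
    _ ≤ ∑' k : ℤ, ENNReal.ofReal (2 ^ (3 * p - 1)) * C₀ ^ p * J k := ENNReal.tsum_le_tsum hlevel
    _ ≤ _ := by
        rw [ENNReal.tsum_mul_left]
        exact mul_le_mul_right
          (tsum_setLIntegral_dyadic_annulus_le hu.continuous.abs.measurable _) _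

end Lorentz

lemma gradEnergy_withDensity_ofReal {E : Type*} [NormedAddCommGroup E] [NormedSpace ℝ E]
    [MeasurableSpace E] (m : Measure E) {v : E → ℝ} (hv : AEMeasurable v m) (p : ℝ) (u : E → ℝ) :
    gradEnergy (m.withDensity fun x => ENNReal.ofReal (v x)) p u =
      ∫⁻ x, (‖fderiv ℝ u x‖₊ : ℝ≥0∞) ^ p * ENNReal.ofReal (v x) ∂m := by
  rw [gradEnergy, lintegral_withDensity_eq_lintegral_mul_non_measurable₀ _ hv.ennreal_ofReal
    (.of_forall fun _ => ENNReal.ofReal_lt_top)]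
  simp only [Pi.mul_apply, mul_comm]

theorem weak_implies_lorentz_sobolev (n : ℕ) (p q : ℝ) (hp : 1 ≤ p) (hq : 1 ≤ q)
    (C₀ : ℝ≥0∞) (hC₀ : C₀ ≠ ⊤) :
    ∃ C : ℝ≥0∞, C ≠ ⊤ ∧
      ∀ (w v : EuclideanSpace ℝ (Fin n) → ℝ),
        (∀ x, 0 ≤ w x) → (∀ x, 0 ≤ v x) →
        LocallyIntegrable w volume → LocallyIntegrable v volume →
        (∀ u : EuclideanSpace ℝ (Fin n) → ℝ,
          (∃ K : NNReal, LipschitzWith K u) → HasCompactSupport u →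
            (⨆ (t : ℝ) (_ : 0 < t),
                ENNReal.ofReal t *
                  ((volume.withDensity fun x => ENNReal.ofReal (w x))
                      {x | t < |u x|}) ^ (1 / q))
              ≤ C₀ * (∫⁻ x, (‖fderiv ℝ u x‖₊ : ℝ≥0∞) ^ p *
                  ENNReal.ofReal (v x)) ^ (1 / p)) →
        ∀ u : EuclideanSpace ℝ (Fin n) → ℝ,
          (∃ K : NNReal, LipschitzWith K u) → HasCompactSupport u →
            (ENNReal.ofReal q *
                ∫⁻ t in Set.Ioi (0 : ℝ),
                  ENNReal.ofReal (t ^ (p - 1)) *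
                    ((volume.withDensity fun x => ENNReal.ofReal (w x))
                        {x | t < |u x|}) ^ (p / q)) ^ (1 / p)
              ≤ C * (∫⁻ x, (‖fderiv ℝ u x‖₊ : ℝ≥0∞) ^ p *
                  ENNReal.ofReal (v x)) ^ (1 / p) := by
  have hp₀ : 0 < p := by linarith
  refine ⟨(ENNReal.ofReal q * ENNReal.ofReal (2 ^ (3 * p - 1))) ^ (1 / p) * C₀, by finiteness, ?_⟩
  intro w v _ _ _ hv hweak u ⟨K, hu⟩ hsupp
  have henergy := gradEnergy_withDensity_ofReal volume hv.aestronglyMeasurable.aemeasurable p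
  have hlorentz := lintegral_rpow_mul_measure_le_of_weakType _ _ hp (by linarith)
    (fun f hf hfs => (henergy f).symm ▸ hweak f hf hfs) hu hsupp
  rw [← henergy]
  calc _ ≤ (ENNReal.ofReal q * (ENNReal.ofReal (2 ^ (3 * p - 1)) * C₀ ^ p * gradEnergy _ p u))
        ^ (1 / p) := by gcongr
    _ = _ := by
        rw [← mul_assoc, ← mul_assoc, ENNReal.mul_rpow_of_nonneg _ _ (by positivity),
          ENNReal.mul_rpow_of_nonneg _ _ (by positivity), one_div, ENNReal.rpow_rpow_inv hp₀.ne']
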